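/- Let γ ∈ ℝ, s ∈ (0,1), and define ã(v,η) = ⟨v⟩^γ (1 + |η|² + |v∧η|² + |v|²)^s for (v,η) ∈ ℝ³×ℝ³, where v∧η is the cross product and ⟨v⟩ = (1+|v|²)^{1/2}. Then ã is a temperate weight: there exist constants C > 0 and N > 0 such that for all X, Y ∈ ℝ⁶, ã(X)/ã(Y) ≤ C ⟨X−Y⟩^N. -/

import Mathlib

/-- Cross product of two vectors in `ℝ³` (as `EuclideanSpace ℝ (Fin 3)`). -/
noncomputable def cross (v w : EuclideanSpace ℝ (Fin 3)) : EuclideanSpace ℝ (Fin 3) :=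
  WithLp.toLp 2 (fun i => ![v 1 * w 2 - v 2 * w 1, v 2 * w 0 - v 0 * w 2, v 0 * w 1 - v 1 * w 0] i)

/-- The weight `ã(v,η) = ⟨v⟩^γ (1+|η|²+|v∧η|²+|v|²)^s`. -/
noncomputable def atilde (γ s : ℝ) (v η : EuclideanSpace ℝ (Fin 3)) : ℝ :=
  (1 + ‖v‖ ^ 2) ^ (γ / 2) * (1 + ‖η‖ ^ 2 + ‖cross v η‖ ^ 2 + ‖v‖ ^ 2) ^ s

/-!
Both factors of `ã` are real powers of positive temperate weights, and temperance is stable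
under products and real powers (negative ones by exchanging `X` and `Y`). The weight
`1 + ‖v‖²` is temperate by Peetre's inequality `1 + ‖v‖² ≤ 2 (1 + ‖v - v'‖²) (1 + ‖v'‖²)`.
For `p(v, η)² = 1 + ‖η‖² + ‖v ∧ η‖² + ‖v‖²`, bilinearity of `∧` and `‖a ∧ b‖ ≤ ‖a‖ ‖b‖`
bound each of `1, ‖v‖, ‖η‖, ‖v ∧ η‖` by `p(v', η') (1 + ‖v - v'‖ + ‖η - η'‖)²`.
-/

def IsTemperate {E : Type*} [SeminormedAddCommGroup E] (f : E → ℝ) : Prop :=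
  ∃ C > (0 : ℝ), ∃ N > (0 : ℝ), ∀ x y, f x ≤ C * (1 + ‖x - y‖ ^ 2) ^ (N / 2) * f y

namespace IsTemperate

variable {E F : Type*} [SeminormedAddCommGroup E] [SeminormedAddCommGroup F] {f g : E → ℝ}

theorem of_bound {C N : ℝ} (hC : 0 < C) (hN : 0 ≤ N) (hf : ∀ x, 0 ≤ f x)
    (h : ∀ x y, f x ≤ C * (1 + ‖x - y‖ ^ 2) ^ (N / 2) * f y) : IsTemperate f := by
  refine ⟨C, hC, N + 1, by linarith, fun x y => (h x y).trans ?_⟩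
  have hD : 1 ≤ 1 + ‖x - y‖ ^ 2 := le_add_of_nonneg_right (sq_nonneg _)
  have := hf y
  gcongr (C * ?_ * f y)
  exact Real.rpow_le_rpow_of_exponent_le hD (by linarith)

theorem mul (hf : IsTemperate f) (hg : IsTemperate g) (hf0 : ∀ x, 0 ≤ f x)
    (hg0 : ∀ x, 0 ≤ g x) : IsTemperate fun x => f x * g x := by
  obtain ⟨C₁, hC₁, N₁, hN₁, h₁⟩ := hf
  obtain ⟨C₂, hC₂, N₂, hN₂, h₂⟩ := hg
  refine ⟨C₁ * C₂, by positivity, N₁ + N₂, by positivity, fun x y => ?_⟩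
  have hD : 0 < 1 + ‖x - y‖ ^ 2 := by positivity
  have := hf0 y
  calc f x * g x
      ≤ (C₁ * (1 + ‖x - y‖ ^ 2) ^ (N₁ / 2) * f y) * (C₂ * (1 + ‖x - y‖ ^ 2) ^ (N₂ / 2) * g y) :=
        mul_le_mul (h₁ x y) (h₂ x y) (hg0 x) (by positivity)
    _ = _ := by rw [add_div, Real.rpow_add hD]; ring

theorem inv (hf : IsTemperate f) (hpos : ∀ x, 0 < f x) : IsTemperate fun x => (f x)⁻¹ := by
  obtain ⟨C, hC, N, hN, h⟩ := hf
  refine ⟨C, hC, N, hN, fun x y => ?_⟩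
  have hyx := h y x
  rw [norm_sub_rev] at hyx
  have := hpos x
  have := hpos y
  calc (f x)⁻¹ = f y * (f x)⁻¹ * (f y)⁻¹ := by field_simp
    _ ≤ C * (1 + ‖x - y‖ ^ 2) ^ (N / 2) * f x * (f x)⁻¹ * (f y)⁻¹ := by gcongr
    _ = _ := by field_simp

theorem rpow_of_nonneg (hf : IsTemperate f) (hf0 : ∀ x, 0 ≤ f x) {r : ℝ} (hr : 0 ≤ r) :
    IsTemperate fun x => f x ^ r := by
  obtain ⟨C, hC, N, hN, h⟩ := hf
  refine of_bound (C := C ^ r) (N := r * N) (by positivity) (by positivity)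
    (fun x => Real.rpow_nonneg (hf0 x) r) fun x y => ?_
  have hD : 0 ≤ 1 + ‖x - y‖ ^ 2 := by positivity
  calc f x ^ r ≤ (C * (1 + ‖x - y‖ ^ 2) ^ (N / 2) * f y) ^ r :=
        Real.rpow_le_rpow (hf0 x) (h x y) hr
    _ = _ := by
      rw [Real.mul_rpow (by positivity) (hf0 y), Real.mul_rpow hC.le (by positivity),
        ← Real.rpow_mul hD]
      ring_nf

theorem rpow (hf : IsTemperate f) (hpos : ∀ x, 0 < f x) (r : ℝ) :
    IsTemperate fun x => f x ^ r := by
  rcases le_total 0 r with hr | hr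
  · exact hf.rpow_of_nonneg (fun x => (hpos x).le) hr
  · have := (hf.inv hpos).rpow_of_nonneg (fun x => (inv_pos.2 (hpos x)).le) (neg_nonneg.2 hr)
    simpa [Real.inv_rpow (hpos _).le, Real.rpow_neg (hpos _).le] using this

theorem comp_lipschitzWith (hf : IsTemperate f) (hf0 : ∀ x, 0 ≤ f x) {φ : F → E}
    (hφ : LipschitzWith 1 φ) : IsTemperate (f ∘ φ) := by
  obtain ⟨C, hC, N, hN, h⟩ := hf
  refine ⟨C, hC, N, hN, fun x y => (h (φ x) (φ y)).trans ?_⟩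
  have : ‖φ x - φ y‖ ≤ ‖x - y‖ := by simpa [dist_eq_norm] using hφ.dist_le_mul x y
  have := hf0 (φ y)
  gcongr (C * ?_ * f (φ y))
  gcongr

end IsTemperate

theorem isTemperate_one_add_norm_sq {E : Type*} [SeminormedAddCommGroup E] :
    IsTemperate fun x : E => 1 + ‖x‖ ^ 2 := by
  refine .of_bound (C := 2) (N := 2) two_pos zero_le_two (fun x => by positivity) fun x y => ?_
  have h := norm_le_norm_add_norm_sub' x y
  rw [div_self two_ne_zero, Real.rpow_one]
  nlinarith [pow_le_pow_left₀ (norm_nonneg x) h 2, sq_nonneg (‖y‖ - ‖x - y‖),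
    mul_nonneg (sq_nonneg ‖x - y‖) (sq_nonneg ‖y‖)]

local notation "ℝ³" => EuclideanSpace ℝ (Fin 3)

theorem norm_cross_sq (v w : ℝ³) : ‖cross v w‖ ^ 2 = ‖v‖ ^ 2 * ‖w‖ ^ 2 - inner ℝ v w ^ 2 := by
  simp only [cross, EuclideanSpace.real_norm_sq_eq, Fin.sum_univ_three, Matrix.cons_val_zero,
    Matrix.cons_val_one, Matrix.cons_val, PiLp.inner_apply, RCLike.inner_apply, Real.ringHom_apply]
  ring

theorem norm_cross_le (v w : ℝ³) : ‖cross v w‖ ≤ ‖v‖ * ‖w‖ := by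
  refine le_of_sq_le_sq ?_ (by positivity)
  rw [norm_cross_sq, mul_pow]
  nlinarith [sq_nonneg (inner ℝ v w)]

theorem cross_sub_cross (v w v' w' : ℝ³) :
    cross v w - cross v' w' = cross v' (w - w') + cross (v - v') w' + cross (v - v') (w - w') := by
  ext i
  fin_cases i <;> simp [cross] <;> ring

theorem norm_cross_sub_cross_le (v w v' w' : ℝ³) :
    ‖cross v w - cross v' w'‖ ≤ ‖v'‖ * ‖w - w'‖ + ‖v - v'‖ * ‖w'‖ + ‖v - v'‖ * ‖w - w'‖ := by
  rw [cross_sub_cross]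
  refine (norm_add₃_le).trans ?_
  gcongr <;> exact norm_cross_le _ _

noncomputable def crossWeight (v η : ℝ³) : ℝ := 1 + ‖η‖ ^ 2 + ‖cross v η‖ ^ 2 + ‖v‖ ^ 2

theorem crossWeight_pos (v η : ℝ³) : 0 < crossWeight v η := by
  unfold crossWeight; positivity

theorem le_sqrt_crossWeight (v η : ℝ³) :
    1 ≤ √(crossWeight v η) ∧ ‖v‖ ≤ √(crossWeight v η) ∧ ‖η‖ ≤ √(crossWeight v η) ∧
      ‖cross v η‖ ≤ √(crossWeight v η) := by
  have hle : ∀ t, 0 ≤ t → t ^ 2 ≤ crossWeight v η → t ≤ √(crossWeight v η) := fun t ht h =>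
    (Real.le_sqrt ht (crossWeight_pos v η).le).2 h
  have hw : crossWeight v η = 1 + ‖η‖ ^ 2 + ‖cross v η‖ ^ 2 + ‖v‖ ^ 2 := rfl
  have := sq_nonneg ‖η‖
  have := sq_nonneg ‖cross v η‖
  have := sq_nonneg ‖v‖
  exact ⟨hle 1 zero_le_one (by linarith), hle _ (norm_nonneg _) (by linarith),
    hle _ (norm_nonneg _) (by linarith), hle _ (norm_nonneg _) (by linarith)⟩

theorem crossWeight_le_four_mul_sq {v η : ℝ³} {M : ℝ} (h1 : 1 ≤ M) (hv : ‖v‖ ≤ M)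
    (hη : ‖η‖ ≤ M) (hc : ‖cross v η‖ ≤ M) : crossWeight v η ≤ 4 * M ^ 2 := by
  have hsq : ∀ t, 0 ≤ t → t ≤ M → t ^ 2 ≤ M ^ 2 := fun t ht h => pow_le_pow_left₀ ht h 2
  unfold crossWeight
  linarith [hsq 1 zero_le_one h1, hsq _ (norm_nonneg _) hv, hsq _ (norm_nonneg _) hη,
    hsq _ (norm_nonneg _) hc]

theorem crossWeight_le (v η v' η' : ℝ³) :
    crossWeight v η ≤ 36 * (1 + (‖v - v'‖ ^ 2 + ‖η - η'‖ ^ 2)) ^ 2 * crossWeight v' η' := by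
  set a := ‖v - v'‖
  set b := ‖η - η'‖
  set p := √(crossWeight v' η')
  obtain ⟨h1, hv', hη', hc'⟩ := le_sqrt_crossWeight v' η'
  have ha : 0 ≤ a := norm_nonneg _
  have hb : 0 ≤ b := norm_nonneg _
  set M := p * (1 + a + b) ^ 2
  have hpa : a ≤ p * a := le_mul_of_one_le_left ha h1
  have hpb : b ≤ p * b := le_mul_of_one_le_left hb h1
  have hM : p + p * a + p * b + a * b ≤ M := by
    nlinarith [mul_nonneg (mul_nonneg ha hb) (by linarith : 0 ≤ p - 1), mul_nonneg ha hb,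
      mul_nonneg (by linarith : 0 ≤ p) (add_nonneg (sq_nonneg a) (sq_nonneg b))]
  have hpa0 : 0 ≤ p * a := by positivity
  have hpb0 : 0 ≤ p * b := by positivity
  have hab0 : 0 ≤ a * b := by positivity
  have hM1 : 1 ≤ M := by linarith
  have hv : ‖v‖ ≤ ‖v'‖ + a := norm_le_norm_add_norm_sub' v v'
  have hη : ‖η‖ ≤ ‖η'‖ + b := norm_le_norm_add_norm_sub' η η'
  have hMv : ‖v‖ ≤ M := by linarith
  have hMη : ‖η‖ ≤ M := by linarith
  have hMc : ‖cross v η‖ ≤ M := by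
    have hd : ‖cross v η - cross v' η'‖ ≤ ‖v'‖ * b + a * ‖η'‖ + a * b :=
      norm_cross_sub_cross_le v η v' η'
    have : ‖v'‖ * b + a * ‖η'‖ ≤ p * b + a * p := by gcongr
    linarith [norm_le_norm_add_norm_sub' (cross v η) (cross v' η')]
  have hT : (1 + a + b) ^ 2 ≤ 3 * (1 + (a ^ 2 + b ^ 2)) := by
    nlinarith [sq_nonneg (a - b), sq_nonneg (1 - a), sq_nonneg (1 - b)]
  calc crossWeight v η ≤ 4 * M ^ 2 := crossWeight_le_four_mul_sq hM1 hMv hMη hMc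
    _ = 4 * p ^ 2 * ((1 + a + b) ^ 2) ^ 2 := by ring
    _ ≤ 4 * p ^ 2 * (3 * (1 + (a ^ 2 + b ^ 2))) ^ 2 := by gcongr
    _ = _ := by rw [Real.sq_sqrt (crossWeight_pos v' η').le]; ring

theorem isTemperate_crossWeight :
    IsTemperate fun X : WithLp 2 (ℝ³ × ℝ³) => crossWeight X.fst X.snd := by
  refine .of_bound (C := 36) (N := 4) (by norm_num) (by norm_num)
    (fun X => (crossWeight_pos _ _).le) fun X Y => ?_
  rw [WithLp.prod_norm_sq_eq_of_L2, WithLp.sub_fst, WithLp.sub_snd,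
    show (4 : ℝ) / 2 = (2 : ℕ) by norm_num, Real.rpow_natCast]
  exact crossWeight_le _ _ _ _

-- `WithLp 2` gives `ℝ³ × ℝ³` the Euclidean norm of `ℝ⁶`.
theorem isTemperate_atilde (γ s : ℝ) :
    IsTemperate fun X : WithLp 2 (ℝ³ × ℝ³) => atilde γ s X.fst X.snd := by
  have hbracket : IsTemperate fun X : WithLp 2 (ℝ³ × ℝ³) => 1 + ‖X.fst‖ ^ 2 :=
    isTemperate_one_add_norm_sq.comp_lipschitzWith (fun _ => by positivity)
      (LipschitzWith.of_dist_le_mul fun X Y => by simpa using WithLp.dist_fst_le X Y)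
  exact (hbracket.rpow (fun _ => by positivity) (γ / 2)).mul
    (isTemperate_crossWeight.rpow (fun _ => crossWeight_pos _ _) s)
    (fun _ => by positivity) (fun _ => Real.rpow_nonneg (crossWeight_pos _ _).le s)

theorem atilde_pos (γ s : ℝ) (v η : ℝ³) : 0 < atilde γ s v η :=
  mul_pos (by positivity) (Real.rpow_pos_of_pos (crossWeight_pos v η) s)

theorem atilde_temperate_general (γ s : ℝ) :
    ∃ C > (0 : ℝ), ∃ N > (0 : ℝ), ∀ v η v' η' : EuclideanSpace ℝ (Fin 3),
      atilde γ s v η / atilde γ s v' η'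
        ≤ C * (1 + (‖v - v'‖ ^ 2 + ‖η - η'‖ ^ 2)) ^ (N / 2) := by
  obtain ⟨C, hC, N, hN, h⟩ := isTemperate_atilde γ s
  refine ⟨C, hC, N, hN, fun v η v' η' => ?_⟩
  rw [div_le_iff₀ (atilde_pos γ s v' η')]
  simpa [WithLp.prod_norm_sq_eq_of_L2] using h (WithLp.toLp 2 (v, η)) (WithLp.toLp 2 (v', η'))

/-- Temperance of the weight `ã`: there are `C, N > 0` with
`ã(X)/ã(Y) ≤ C ⟨X−Y⟩^N` for all `X, Y ∈ ℝ⁶`. -/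
theorem atilde_temperate (γ s : ℝ) (hs : s ∈ Set.Ioo (0 : ℝ) 1) :
    ∃ C > (0 : ℝ), ∃ N > (0 : ℝ), ∀ v η v' η' : EuclideanSpace ℝ (Fin 3),
      atilde γ s v η / atilde γ s v' η'
        ≤ C * (1 + (‖v - v'‖ ^ 2 + ‖η - η'‖ ^ 2)) ^ (N / 2) :=
  atilde_temperate_general γ s
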